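/- arXiv:2605.30744 — 3 statements merged into one kernel-verified Lean document; each statement's English description precedes it below -/
import Mathlib

section
/- Let c, d, i be vectors in ℝ² and let f₁, f₂ be linear functionals on ℝ² satisfying f₁(c) = 0, f₂(d) = 0, f₁(d) < 0, f₂(c) < 0, f₁(i) < 0, and f₂(i) < 0. Then for every nonzero linear functional g on ℝ² with g(i) = 0, one has g(c) · g(d) < 0; that is, c and d lie strictly on opposite sides of the line through the origin and i. -/
/-!
The functionals `f₁, f₂` separate `c` and `d`, so `c, d` is a basis of the plane. Evaluating
`f₁` and `f₂` at `i = α • c + β • d` gives `α, β > 0`: the direction `i` lies strictly inside the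
cone spanned by `c` and `d`. Hence `α • g c + β • g d = g i = 0`, and `g c ≠ 0` because `g`
cannot vanish on a basis; so `g c` and `g d` have strictly opposite signs.
-/

open Module Submodule

section

variable {K V : Type*} [Field K] [AddCommGroup V] [Module K V]

theorem linearIndependent_pair_of_apply_eq_zero {f₁ f₂ : V →ₗ[K] K} {c d : V}
    (h1c : f₁ c = 0) (h2d : f₂ d = 0) (h1d : f₁ d ≠ 0) (h2c : f₂ c ≠ 0) :
    LinearIndependent K ![c, d] := by
  refine LinearIndependent.pair_iff.2 fun s t hst => ⟨?_, ?_⟩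
  · simpa [h2d, h2c] using congr(f₂ $hst)
  · simpa [h1c, h1d] using congr(f₁ $hst)

theorem LinearIndependent.span_pair_eq_top {c d : V} (h : LinearIndependent K ![c, d])
    (hV : finrank K V = 2) : span K {c, d} = ⊤ := by
  simpa only [Matrix.range_cons_cons_empty] using
    h.span_eq_top_of_card_eq_finrank (by rw [hV, Fintype.card_fin])

end

/-- If `f₁, f₂` are linear functionals on `ℝ²` with `f₁ c = 0`, `f₂ d = 0`,
`f₁ d < 0`, `f₂ c < 0`, `f₁ i < 0`, `f₂ i < 0`, then every nonzero linear functional `g`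
vanishing at `i` satisfies `g c * g d < 0`. -/
theorem stmt0 (c d i : Fin 2 → ℝ) (f₁ f₂ : (Fin 2 → ℝ) →ₗ[ℝ] ℝ)
    (h1c : f₁ c = 0) (h2d : f₂ d = 0)
    (h1d : f₁ d < 0) (h2c : f₂ c < 0)
    (h1i : f₁ i < 0) (h2i : f₂ i < 0) :
    ∀ g : (Fin 2 → ℝ) →ₗ[ℝ] ℝ, g ≠ 0 → g i = 0 → g c * g d < 0 := by
  intro g hg hgi
  have hspan : span ℝ {c, d} = ⊤ :=
    (linearIndependent_pair_of_apply_eq_zero h1c h2d h1d.ne h2c.ne).span_pair_eq_top (by simp)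
  obtain ⟨α, β, rfl⟩ := mem_span_pair.1 (hspan ▸ mem_top : i ∈ span ℝ {c, d})
  have hα : 0 < α := pos_of_mul_neg_left (by simpa [h2d] using h2i) h2c.le
  have hβ : 0 < β := pos_of_mul_neg_left (by simpa [h1c] using h1i) h1d.le
  replace hgi : α * g c + β * g d = 0 := by simpa using hgi
  have hgc : g c ≠ 0 := fun hgc ↦ hg <| LinearMap.ext_on hspan <| by
    have hgd : g d = 0 := by simpa [hgc, hβ.ne'] using hgi
    simp [Set.EqOn, hgc, hgd]
  refine neg_of_mul_neg_right (a := β) ?_ hβ.le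
  calc β * (g c * g d) = -(α * (g c * g c)) := by linear_combination g c * hgi
    _ < 0 := neg_neg_of_pos (mul_pos hα (mul_self_pos.2 hgc))
end

section
/- Let a, b, c, d, i be points in ℝ³ with the vector n = (b − a) × (i − a) nonzero (i.e., a, b, i are affinely independent). Suppose there exist affine maps F₁, F₂ : ℝ³ → ℝ such that F₁(a) = F₁(b) = F₁(c) = 0, F₁(d) < 0, F₁(i) < 0, and F₂(a) = F₂(b) = F₂(d) = 0, F₂(c) < 0, F₂(i) < 0. Then ((c − a) · n) · ((d − a) · n) < 0; that is, c and d lie strictly on opposite sides of the plane through a, b, and i. -/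
open Matrix

/-!
Let `ℓ₁, ℓ₂` be the linear parts of `F₁, F₂`, and `n = (b - a) × (i - a)`. The combination
`G = F₂(i) ℓ₁ - F₁(i) ℓ₂` vanishes on `b - a` and on `i - a`, so it is a multiple of `x ↦ x ⬝ n`.
Since `G (c - a) = -F₁(i) F₂(c) < 0 < F₂(i) F₁(d) = G (d - a)`, the numbers `(c - a) ⬝ n` and
`(d - a) ⬝ n` have opposite signs.
-/

section CrossProduct

variable {R : Type*}

theorem dotProduct_self_smul_eq_of_dotProduct_eq_zero [CommRing R] {u w g : Fin 3 → R}
    (hu : g ⬝ᵥ u = 0) (hw : g ⬝ᵥ w = 0) :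
    (u ⨯₃ w ⬝ᵥ u ⨯₃ w) • g = (g ⬝ᵥ u ⨯₃ w) • u ⨯₃ w := by
  have hparallel : g ⨯₃ (u ⨯₃ w) = 0 := by
    rw [cross_cross_eq_smul_sub_smul', hw, dotProduct_comm u, hu, zero_smul, zero_smul, sub_zero]
  have h := cross_cross_eq_smul_sub_smul' (u ⨯₃ w) g (u ⨯₃ w)
  rwa [hparallel, map_zero, eq_comm, sub_eq_zero] at h

theorem dotProduct_self_mul_apply_of_apply_eq_zero [CommRing R]
    (ℓ : Module.Dual R (Fin 3 → R)) {u w : Fin 3 → R} (hu : ℓ u = 0) (hw : ℓ w = 0)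
    (x : Fin 3 → R) :
    (u ⨯₃ w ⬝ᵥ u ⨯₃ w) * ℓ x = ℓ (u ⨯₃ w) * (x ⬝ᵥ u ⨯₃ w) := by
  obtain ⟨g, rfl⟩ := (dotProductEquiv R (Fin 3)).surjective ℓ
  simp only [dotProductEquiv_apply_apply] at hu hw ⊢
  have h := congrArg (x ⬝ᵥ ·) (dotProduct_self_smul_eq_of_dotProduct_eq_zero hu hw)
  simpa only [dotProduct_smul, smul_eq_mul, dotProduct_comm _ x] using h

theorem dotProduct_cross_mul_neg_of_apply_mul_neg [CommRing R] [LinearOrder R]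
    [IsStrictOrderedRing R] {u w : Fin 3 → R} (hn : u ⨯₃ w ≠ 0)
    (ℓ : Module.Dual R (Fin 3 → R)) (hu : ℓ u = 0) (hw : ℓ w = 0) {x y : Fin 3 → R}
    (hxy : ℓ x * ℓ y < 0) :
    (x ⬝ᵥ u ⨯₃ w) * (y ⬝ᵥ u ⨯₃ w) < 0 := by
  have hN : 0 < u ⨯₃ w ⬝ᵥ u ⨯₃ w :=
    lt_of_le_of_ne (Fintype.sum_nonneg fun _ => mul_self_nonneg _)
      (Ne.symm (dotProduct_self_eq_zero.not.mpr hn))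
  have hscaled : (u ⨯₃ w ⬝ᵥ u ⨯₃ w) ^ 2 * (ℓ x * ℓ y) =
      ℓ (u ⨯₃ w) ^ 2 * ((x ⬝ᵥ u ⨯₃ w) * (y ⬝ᵥ u ⨯₃ w)) := by
    linear_combination (u ⨯₃ w ⬝ᵥ u ⨯₃ w) * ℓ y *
        dotProduct_self_mul_apply_of_apply_eq_zero ℓ hu hw x +
      ℓ (u ⨯₃ w) * (x ⬝ᵥ u ⨯₃ w) * dotProduct_self_mul_apply_of_apply_eq_zero ℓ hu hw y
  have hneg : ℓ (u ⨯₃ w) ^ 2 * ((x ⬝ᵥ u ⨯₃ w) * (y ⬝ᵥ u ⨯₃ w)) < 0 :=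
    hscaled ▸ mul_neg_of_pos_of_neg (pow_pos hN 2) hxy
  exact neg_of_mul_neg_right hneg (sq_nonneg _)

end CrossProduct

/-- Opposite vertices of two supporting planes along a common edge lie
strictly on opposite sides of the plane through `a`, `b`, `i`. -/
theorem stmt1 (a b c d i : Fin 3 → ℝ)
    (hn : crossProduct (b - a) (i - a) ≠ 0)
    (F₁ F₂ : (Fin 3 → ℝ) →ᵃ[ℝ] ℝ)
    (hF₁a : F₁ a = 0) (hF₁b : F₁ b = 0) (hF₁c : F₁ c = 0)
    (hF₁d : F₁ d < 0) (hF₁i : F₁ i < 0)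
    (hF₂a : F₂ a = 0) (hF₂b : F₂ b = 0) (hF₂d : F₂ d = 0)
    (hF₂c : F₂ c < 0) (hF₂i : F₂ i < 0) :
    ((c - a) ⬝ᵥ crossProduct (b - a) (i - a)) *
      ((d - a) ⬝ᵥ crossProduct (b - a) (i - a)) < 0 := by
  set G : Module.Dual ℝ (Fin 3 → ℝ) := F₂ i • F₁.linear - F₁ i • F₂.linear
  have hG : ∀ x, G (x - a) = F₂ i * F₁ x - F₁ i * F₂ x := fun x => by
    have h₁ : F₁.linear (x - a) = F₁ x - F₁ a := F₁.linearMap_vsub x a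
    have h₂ : F₂.linear (x - a) = F₂ x - F₂ a := F₂.linearMap_vsub x a
    simp only [G, LinearMap.sub_apply, LinearMap.smul_apply, h₁, h₂, hF₁a, hF₂a, sub_zero,
      smul_eq_mul]
  refine dotProduct_cross_mul_neg_of_apply_mul_neg hn G ?_ ?_ ?_
  · rw [hG, hF₁b, hF₂b]; ring
  · rw [hG]; ring
  · rw [hG, hG, hF₁c, hF₂d]
    nlinarith [mul_pos_of_neg_of_neg hF₁i hF₂c, mul_pos_of_neg_of_neg hF₂i hF₁d]
end

section
/- Let a, b, c, d, i be points in ℝ³, let n = (b − a) × (i − a), and assume n ≠ 0 and ((c − a) · n) · ((d − a) · n) < 0. Then the interiors of the two tetrahedra conv{i, a, b, c} and conv{i, a, b, d} are disjoint, where conv denotes the convex hull. -/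
open Matrix

lemma aux_halfspace (a n : Fin 3 → ℝ) (hn0 : n ≠ 0) (S : Set (Fin 3 → ℝ))
    (hS : ∀ y ∈ S, (y - a) ⬝ᵥ n ≤ 0) :
    interior (convexHull ℝ S) ⊆ {x | (x - a) ⬝ᵥ n < 0} := by
  have hlin : IsLinearMap ℝ (fun x : Fin 3 → ℝ => x ⬝ᵥ n) :=
    ⟨fun x y => add_dotProduct x y n, fun c x => smul_dotProduct c x n⟩
  have hconv : Convex ℝ {x : Fin 3 → ℝ | x ⬝ᵥ n ≤ a ⬝ᵥ n} := convex_halfSpace_le hlin _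
  have hhull : convexHull ℝ S ⊆ {x : Fin 3 → ℝ | x ⬝ᵥ n ≤ a ⬝ᵥ n} := by
    apply convexHull_min _ hconv
    intro y hy
    have := hS y hy
    rw [sub_dotProduct] at this
    simpa using this
  have hnn : (0:ℝ) < n ⬝ᵥ n := by
    have hnn0 : (0:ℝ) ≤ n ⬝ᵥ n := Finset.sum_nonneg fun j _ => mul_self_nonneg _
    rcases lt_or_eq_of_le hnn0 with h | h
    · exact h
    · exact absurd (dotProduct_self_eq_zero.mp h.symm) hn0
  intro x hx
  have hxle : x ⬝ᵥ n ≤ a ⬝ᵥ n := hhull (interior_subset hx)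
  rcases lt_or_eq_of_le hxle with h | h
  · simpa [sub_dotProduct, sub_neg] using h
  exfalso
  rcases Metric.isOpen_iff.mp isOpen_interior x hx with ⟨ε, hε, hball⟩
  have hnnorm : (0:ℝ) < ‖n‖ := norm_pos_iff.mpr hn0
  set t : ℝ := ε / (2 * ‖n‖) with ht
  have ht0 : 0 < t := div_pos hε (by positivity)
  have hmem : x + t • n ∈ Metric.ball x ε := by
    simp only [Metric.mem_ball, dist_eq_norm, add_sub_cancel_left, norm_smul,
      Real.norm_eq_abs, abs_of_pos ht0, ht]
    rw [← ht, abs_of_pos ht0, ht, div_mul_eq_mul_div, div_lt_iff₀ (by positivity)]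
    nlinarith
  have hle : (x + t • n) ⬝ᵥ n ≤ a ⬝ᵥ n := hhull (interior_subset (hball hmem))
  rw [add_dotProduct, smul_dotProduct, smul_eq_mul, h] at hle
  nlinarith

/-- If `c` and `d` lie strictly on opposite sides of the plane through
`a`, `b`, `i` (with normal `n = (b - a) × (i - a) ≠ 0`), then the interiors of the
tetrahedra `conv {i, a, b, c}` and `conv {i, a, b, d}` are disjoint. -/
theorem stmt2 (a b c d i : Fin 3 → ℝ) (n : Fin 3 → ℝ)
    (hn : n = crossProduct (b - a) (i - a)) (hn0 : n ≠ 0)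
    (hsign : ((c - a) ⬝ᵥ n) * ((d - a) ⬝ᵥ n) < 0) :
    Disjoint (interior (convexHull ℝ ({i, a, b, c} : Set (Fin 3 → ℝ))))
      (interior (convexHull ℝ ({i, a, b, d} : Set (Fin 3 → ℝ)))) := by
  have hia : (i - a) ⬝ᵥ n = 0 := by rw [hn]; exact dot_cross_self _ _
  have haa : (a - a) ⬝ᵥ n = 0 := by simp
  have hba : (b - a) ⬝ᵥ n = 0 := by rw [hn]; exact dot_self_cross _ _
  have hn0' : -n ≠ 0 := by simpa using hn0
  -- negative side
  have keyneg : ∀ e : Fin 3 → ℝ, (e - a) ⬝ᵥ n < 0 →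
      interior (convexHull ℝ ({i, a, b, e} : Set (Fin 3 → ℝ)))
        ⊆ {x | (x - a) ⬝ᵥ n < 0} := by
    intro e he
    apply aux_halfspace a n hn0
    rintro y (rfl | rfl | rfl | rfl)
    · exact le_of_eq hia
    · exact le_of_eq haa
    · exact le_of_eq hba
    · exact le_of_lt he
  -- positive side
  have keypos : ∀ e : Fin 3 → ℝ, 0 < (e - a) ⬝ᵥ n →
      interior (convexHull ℝ ({i, a, b, e} : Set (Fin 3 → ℝ)))
        ⊆ {x | 0 < (x - a) ⬝ᵥ n} := by
    intro e he
    have h := aux_halfspace a (-n) hn0' {i, a, b, e} ?_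
    · intro x hx
      have := h hx
      simp only [Set.mem_setOf_eq, dotProduct_neg] at this ⊢
      linarith
    · rintro y (rfl | rfl | rfl | rfl) <;>
        simp only [dotProduct_neg] <;> linarith
  have hdisj : ∀ (hc : (c - a) ⬝ᵥ n < 0) (hd : 0 < (d - a) ⬝ᵥ n), Disjoint
      (interior (convexHull ℝ ({i, a, b, c} : Set (Fin 3 → ℝ))))
      (interior (convexHull ℝ ({i, a, b, d} : Set (Fin 3 → ℝ)))) := by
    intro hc hd
    rw [Set.disjoint_left]
    intro x hx1 hx2
    have h1 := keyneg c hc hx1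
    have h2 := keypos d hd hx2
    simp only [Set.mem_setOf_eq] at h1 h2
    linarith
  rcases mul_neg_iff.mp hsign with ⟨hc, hd⟩ | ⟨hc, hd⟩
  · -- c positive, d negative: symmetric, swap roles
    rw [disjoint_comm]
    rw [Set.disjoint_left]
    intro x hx1 hx2
    have h1 := keyneg d hd hx1
    have h2 := keypos c hc hx2
    simp only [Set.mem_setOf_eq] at h1 h2
    linarith
  · exact hdisj hc hd
end
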